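/- For any real symmetric trace-free 3×3 matrix M, -4·det(M) ≤ (2/9)·√6·|M|³, where |M| denotes the Frobenius (Euclidean) norm of M. -/

import Mathlib

/-!
Diagonalise `M` orthogonally: with eigenvalues `x, y, z` we have `x + y + z = 0`,
`det M = x y z` and `|M|² = x² + y² + z²`. For a cubic with real roots summing to zero,
nonnegativity of the discriminant `((x - y)(y - z)(z - x))²` is exactly
`54 (x y z)² ≤ (x² + y² + z²)³`, and taking square roots gives the bound.
-/

open Matrix

noncomputable def frob (M : Matrix (Fin 3) (Fin 3) ℝ) : ℝ :=
  Real.sqrt (∑ i, ∑ j, (M i j) ^ 2)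

theorem neg_four_mul_mul_le_of_add_add_eq_zero {x y z : ℝ} (h : x + y + z = 0) :
    -4 * (x * y * z) ≤ 2 / 9 * √6 * √(x ^ 2 + y ^ 2 + z ^ 2) ^ 3 := by
  set s := x ^ 2 + y ^ 2 + z ^ 2
  have hdisc : s ^ 3 - 54 * (x * y * z) ^ 2 = 2 * ((x - y) * (y - z) * (z - x)) ^ 2 := by
    obtain rfl : z = -x - y := by linarith
    ring
  have hs : 0 ≤ s := by positivity
  have hrhs : (2 / 9 * √6 * √s ^ 3) ^ 2 = 8 / 27 * s ^ 3 := by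
    rw [mul_pow, mul_pow, ← pow_mul, mul_comm 3, pow_mul, Real.sq_sqrt hs,
      Real.sq_sqrt (by norm_num)]
    ring
  refine le_of_sq_le_sq ?_ (by positivity)
  rw [hrhs]
  nlinarith [hdisc, sq_nonneg ((x - y) * (y - z) * (z - x))]

namespace Matrix.IsHermitian

variable {𝕜 n : Type*} [RCLike 𝕜] [Fintype n] [DecidableEq n] {A : Matrix n n 𝕜}

theorem trace_mul_self_eq_sum_sq_eigenvalues (hA : A.IsHermitian) :
    (A * A).trace = ∑ i, (hA.eigenvalues i : 𝕜) ^ 2 := by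
  conv_lhs => rw [hA.spectral_theorem, ← map_mul, Unitary.conjStarAlgAut_apply, trace_mul_cycle,
    Unitary.coe_star_mul_self, one_mul, diagonal_mul_diagonal, trace_diagonal]
  simp [sq]

theorem sum_sq_norm_eq_sum_sq_eigenvalues (hA : A.IsHermitian) :
    ∑ i, ∑ j, ‖A i j‖ ^ 2 = ∑ i, hA.eigenvalues i ^ 2 := by
  apply RCLike.ofReal_injective (K := 𝕜)
  push_cast
  rw [← hA.trace_mul_self_eq_sum_sq_eigenvalues, ← congrArg (· * A) hA.eq, Finset.sum_comm]
  simp [trace, mul_apply, RCLike.conj_mul]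

end Matrix.IsHermitian

/-- For any real symmetric trace-free 3×3 matrix `M`,
`-4 det M ≤ (2/9)·√6·|M|³` with `|M|` the Frobenius norm. -/
theorem neg_four_det_le (M : Matrix (Fin 3) (Fin 3) ℝ)
    (hsym : M.IsSymm) (htr : M.trace = 0) :
    -4 * M.det ≤ (2 / 9) * Real.sqrt 6 * (frob M) ^ 3 := by
  have hM : M.IsHermitian := isHermitian_iff_isSymm.mpr hsym
  have hfrob : frob M = √(∑ i, hM.eigenvalues i ^ 2) := by
    simp [frob, ← hM.sum_sq_norm_eq_sum_sq_eigenvalues]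
  have hsum : ∑ i, hM.eigenvalues i = 0 := by
    simpa [hM.trace_eq_sum_eigenvalues] using htr
  rw [hM.det_eq_prod_eigenvalues, hfrob]
  simp only [Fin.sum_univ_three, Fin.prod_univ_three] at hsum ⊢
  simpa using neg_four_mul_mul_le_of_add_add_eq_zero hsum
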